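/- arXiv:math/0211101 — 6 statements merged into one kernel-verified Lean document; each statement's English description precedes it below -/
import Mathlib

section
/- Let n ≥ 1 and 0 ≤ p ≤ n be integers and let i, j, k, ℓ ∈ {1,…,n} be pairwise distinct. Then ∑_{|I|=p} sgn_I(i)·sgn_I(j)·sgn_I(k)·sgn_I(ℓ) = 16·C(n−4,p−2) − 8·C(n−2,p−1) + C(n,p). -/
/-!
Put `S = {i, j, k, l}`. The summand depends only on `J = I ∩ S`, where it equals
`(-1) ^ (4 - |J|)`, and exactly `C(n - 4, p - |J|)` sets `I` of size `p` meet `S` in `J`.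
Grouping the `J ⊆ S` by size gives `∑ₜ C(4, t) (-1) ^ (4 - t) C(n - 4, p - t)`, which Pascal's
rule rewrites as the stated combination.
-/

/-- Binomial coefficient with the convention `C a b = 0` if `b < 0` or `b > a`. -/
def C (a b : ℤ) : ℤ := if 0 ≤ b ∧ b ≤ a then (a.toNat.choose b.toNat : ℤ) else 0

open Finset

lemma C_natCast (m k : ℕ) : C m k = m.choose k := by
  unfold C
  split_ifs with h
  · simp
  · rw [Nat.choose_eq_zero_of_lt (by omega), Nat.cast_zero]

lemma C_of_neg (a : ℤ) {b : ℤ} (hb : b < 0) : C a b = 0 := if_neg (by omega)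

lemma C_succ {a : ℤ} (ha : 0 ≤ a) (b : ℤ) : C (a + 1) b = C a b + C a (b - 1) := by
  lift a to ℕ using ha
  rcases lt_or_ge b 0 with hb | hb
  · rw [C_of_neg _ hb, C_of_neg _ hb, C_of_neg _ (by omega), add_zero]
  lift b to ℕ using hb
  rw [← Nat.cast_succ, C_natCast, C_natCast]
  cases b with
  | zero => rw [C_of_neg _ (by omega)]; simp
  | succ b =>
    rw [Nat.cast_succ, add_sub_cancel_right, C_natCast, Nat.choose_succ_succ, Nat.cast_add,
      add_comm]

lemma C_add_two {a : ℤ} (ha : 0 ≤ a) (b : ℤ) :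
    C (a + 2) b = C a b + 2 * C a (b - 1) + C a (b - 2) := by
  rw [show a + 2 = a + 1 + 1 by ring, C_succ (by omega), C_succ ha, C_succ ha]
  ring_nf

lemma C_add_four {a : ℤ} (ha : 0 ≤ a) (b : ℤ) :
    C (a + 4) b = C a b + 4 * C a (b - 1) + 6 * C a (b - 2) + 4 * C a (b - 3) + C a (b - 4) := by
  rw [show a + 4 = a + 2 + 2 by ring, C_add_two (by omega), C_add_two ha, C_add_two ha,
    C_add_two ha]
  ring_nf

lemma sum_range_five_choose_smul_C {a : ℤ} (ha : 0 ≤ a) (b : ℤ) :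
    ∑ t ∈ range 5, (4).choose t • (C a (b - t) * (-1) ^ (4 - t)) =
      16 * C a (b - 2) - 8 * C (a + 2) (b - 1) + C (a + 4) b := by
  rw [C_add_two ha, C_add_four ha]
  simp only [sum_range_succ, sum_range_zero, nsmul_eq_mul]
  norm_num [Nat.choose]
  ring_nf

section Subsets

variable {α : Type*} [Fintype α] [DecidableEq α]

lemma card_filter_inter_eq_of_le {S J : Finset α} (hJ : J ⊆ S) {p : ℕ} (hp : #J ≤ p) :
    #{I ∈ powersetCard p univ | I ∩ S = J} = #(powersetCard (p - #J) Sᶜ) := by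
  apply card_nbij' (· \ S) (· ∪ J)
  · intro I hI
    simp only [coe_filter, mem_powersetCard, subset_univ, true_and, mem_coe] at hI ⊢
    refine ⟨fun x => by simp +contextual, ?_⟩
    rw [← hI.2, ← hI.1]
    have := card_sdiff_add_card_inter I S
    omega
  · intro K hK
    simp only [mem_powersetCard, mem_coe] at hK
    simp only [coe_filter, mem_powersetCard, subset_univ, true_and]
    have hdisj : Disjoint K S := subset_compl_iff_disjoint_right.mp hK.1
    constructor
    · rw [card_union_of_disjoint (hdisj.mono_right hJ)]; omega
    · grind [disjoint_left]
  · intro I hI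
    simp only [coe_filter, mem_powersetCard, subset_univ, true_and] at hI
    grind
  · intro K hK
    simp only [mem_powersetCard, mem_coe] at hK
    grind [mem_compl]

lemma card_filter_inter_eq {S J : Finset α} (hJ : J ⊆ S) (p : ℕ) :
    (#{I ∈ powersetCard p univ | I ∩ S = J} : ℤ) = C (Fintype.card α - #S) (p - #J) := by
  by_cases hp : #J ≤ p
  · rw [card_filter_inter_eq_of_le hJ hp, card_powersetCard, card_compl,
      ← Nat.cast_sub (card_le_univ S), ← Nat.cast_sub hp, C_natCast]
  · rw [C_of_neg _ (by omega), Nat.cast_eq_zero, card_eq_zero, filter_eq_empty_iff]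
    rintro I hI rfl
    exact hp ((card_le_card inter_subset_left).trans (mem_powersetCard.mp hI).2.le)

lemma sum_powersetCard_comp_inter (f : Finset α → ℤ) (S : Finset α) (p : ℕ) :
    ∑ I ∈ powersetCard p univ, f (I ∩ S) =
      ∑ J ∈ S.powerset, C (Fintype.card α - #S) (p - #J) * f J := by
  rw [← sum_fiberwise_of_maps_to' (t := S.powerset)
    (fun I _ ↦ mem_powerset.mpr inter_subset_right)]
  refine sum_congr rfl fun J hJ ↦ ?_
  rw [sum_const, nsmul_eq_mul, card_filter_inter_eq (mem_powerset.mp hJ)]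

end Subsets

lemma prod_ite_mem_one_neg_one {α : Type*} [DecidableEq α] (S J : Finset α) :
    ∏ x ∈ S, (if x ∈ J then (1 : ℤ) else -1) = (-1) ^ #(S \ J) := by
  rw [prod_ite, prod_const_one, prod_const, one_mul, sdiff_eq_filter]

theorem stmt2_general (n p : ℕ) (i j k l : Fin n)
    (hij : i ≠ j) (hik : i ≠ k) (hil : i ≠ l) (hjk : j ≠ k) (hjl : j ≠ l) (hkl : k ≠ l) :
    ∑ I ∈ Finset.powersetCard p (Finset.univ : Finset (Fin n)),
      ((if i ∈ I then (1 : ℤ) else -1) * (if j ∈ I then (1 : ℤ) else -1) *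
        (if k ∈ I then (1 : ℤ) else -1) * (if l ∈ I then (1 : ℤ) else -1)) =
      16 * C ((n : ℤ) - 4) ((p : ℤ) - 2) - 8 * C ((n : ℤ) - 2) ((p : ℤ) - 1) +
        C (n : ℤ) (p : ℤ) := by
  set S : Finset (Fin n) := {i, j, k, l}
  have hS : #S = 4 := by simp [S, card_insert_of_notMem, *]
  have hn : 4 ≤ n := by simpa [hS] using card_le_univ S
  have hsummand (I : Finset (Fin n)) :
      (if i ∈ I then (1 : ℤ) else -1) * (if j ∈ I then (1 : ℤ) else -1) *
        (if k ∈ I then (1 : ℤ) else -1) * (if l ∈ I then (1 : ℤ) else -1) =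
      ∏ x ∈ S, if x ∈ I ∩ S then 1 else -1 := by
    simp [S, prod_insert, *]
  have hsign (J : Finset (Fin n)) (hJ : J ∈ S.powerset) :
      C (n - 4) (p - #J) * ∏ x ∈ S, (if x ∈ J then (1 : ℤ) else -1) =
        C (n - 4) (p - #J) * (-1) ^ (4 - #J) := by
    rw [prod_ite_mem_one_neg_one, card_sdiff_of_subset (mem_powerset.mp hJ), hS]
  calc _ = ∑ J ∈ S.powerset, C (n - 4) (p - #J) * (-1) ^ (4 - #J) := by
        rw [sum_congr rfl fun I _ ↦ hsummand I,
          sum_powersetCard_comp_inter (fun J ↦ ∏ x ∈ S, if x ∈ J then 1 else -1),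
          Fintype.card_fin, hS, Nat.cast_ofNat, sum_congr rfl hsign]
    _ = ∑ t ∈ range 5, (4).choose t • (C (n - 4) (p - t) * (-1) ^ (4 - t)) := by
        rw [sum_powerset_apply_card (fun t ↦ C (n - 4) (p - t) * (-1) ^ (4 - t)), hS]
    _ = _ := by
        rw [sum_range_five_choose_smul_C (by omega), sub_add_cancel,
          show (n : ℤ) - 4 + 2 = n - 2 by ring]

theorem stmt2 (n p : ℕ) (hn : 1 ≤ n) (hp : p ≤ n) (i j k l : Fin n)
    (hij : i ≠ j) (hik : i ≠ k) (hil : i ≠ l) (hjk : j ≠ k) (hjl : j ≠ l) (hkl : k ≠ l) :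
    ∑ I ∈ Finset.powersetCard p (Finset.univ : Finset (Fin n)),
      ((if i ∈ I then (1 : ℤ) else -1) * (if j ∈ I then (1 : ℤ) else -1) *
        (if k ∈ I then (1 : ℤ) else -1) * (if l ∈ I then (1 : ℤ) else -1)) =
      16 * C ((n : ℤ) - 4) ((p : ℤ) - 2) - 8 * C ((n : ℤ) - 2) ((p : ℤ) - 1) +
        C (n : ℤ) (p : ℤ) :=
  stmt2_general n p i j k l hij hik hil hjk hjl hkl
end

section
/- Let h be a symmetric n×n real matrix and let ξ ∈ ℝ^n be nonzero. Then tr((h·Π_ξ^⊥)²) ≥ 0, and tr((h·Π_ξ^⊥)²) = 0 if and only if there exists η ∈ ℝ^n such that h = ξ η^T + η ξ^T. In particular, if h is not of the form ξ η^T + η ξ^T for any η, then tr((h·Π_ξ^⊥)²) > 0. -/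
open Matrix

/-- Orthogonal projection onto the orthogonal complement of `ξ`:
`Π_ξ^⊥ = I - |ξ|⁻² ξ ξᵀ`. -/
noncomputable def Pperp {n : ℕ} (ξ : Fin n → ℝ) : Matrix (Fin n) (Fin n) ℝ :=
  1 - (∑ i, ξ i ^ 2)⁻¹ • Matrix.vecMulVec ξ ξ

theorem stmt6 {n : ℕ} (h : Matrix (Fin n) (Fin n) ℝ) (hsym : h.IsSymm)
    (ξ : Fin n → ℝ) (hξ : ξ ≠ 0) :
    0 ≤ Matrix.trace ((h * Pperp ξ) * (h * Pperp ξ)) ∧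
      (Matrix.trace ((h * Pperp ξ) * (h * Pperp ξ)) = 0 ↔
        ∃ η : Fin n → ℝ, h = Matrix.vecMulVec ξ η + Matrix.vecMulVec η ξ) ∧
      ((¬ ∃ η : Fin n → ℝ, h = Matrix.vecMulVec ξ η + Matrix.vecMulVec η ξ) →
        0 < Matrix.trace ((h * Pperp ξ) * (h * Pperp ξ))) := by
  classical
  have hsymm : ∀ i j, h i j = h j i := fun i j => hsym.apply j i
  set s : ℝ := ∑ i, ξ i ^ 2 with hs_def
  have hs : 0 < s := by
    obtain ⟨i, hi⟩ := Function.ne_iff.mp hξ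
    exact Finset.sum_pos' (fun j _ => sq_nonneg _) ⟨i, Finset.mem_univ i, lt_of_le_of_ne (sq_nonneg _) (Ne.symm (pow_ne_zero 2 hi))⟩
  have hs0 : s ≠ 0 := ne_of_gt hs
  set P : Matrix (Fin n) (Fin n) ℝ := Pperp ξ with hP_def
  have hPapp : ∀ i j, P i j = (if i = j then (1:ℝ) else 0) - s⁻¹ * (ξ i * ξ j) := by
    intro i j
    rw [hP_def]
    simp [Pperp, Matrix.sub_apply, one_apply, vecMulVec_apply, ← hs_def]
  set a : Fin n → ℝ := fun i => ∑ j, h i j * ξ j with ha_def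
  set c : ℝ := ∑ i, ξ i * a i with hc_def
  have hai : ∀ i, (∑ k, h i k * ξ k) = a i := fun i => rfl
  have hca : c = ∑ k, a k * ξ k := hc_def.trans (Finset.sum_congr rfl fun k _ => mul_comm _ _)
  set N : Matrix (Fin n) (Fin n) ℝ :=
    Matrix.of (fun i j => h i j - s⁻¹ * ξ i * a j - s⁻¹ * a i * ξ j
      + s⁻¹ * s⁻¹ * c * ξ i * ξ j) with hN_def
  have hNapp : ∀ i j, N i j = h i j - s⁻¹ * ξ i * a j - s⁻¹ * a i * ξ j
      + s⁻¹ * s⁻¹ * c * ξ i * ξ j := fun i j => rfl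
  -- P * P = P
  have hPP : P * P = P := by
    ext i j
    rw [mul_apply, hPapp i j]
    calc ∑ k, P i k * P k j
        = ∑ k, ((if i = k then P k j else 0) - ξ i * (s⁻¹ * (ξ k * P k j))) := by
          refine Finset.sum_congr rfl fun k _ => ?_
          rw [hPapp i k]; split_ifs with hik
          · subst hik; ring
          · ring
      _ = P i j - ξ i * (s⁻¹ * ∑ k, ξ k * P k j) := by
          rw [Finset.sum_sub_distrib, Finset.sum_ite_eq, ← Finset.mul_sum, ← Finset.mul_sum]
          simp
      _ = _ := by
          have : ∑ k, ξ k * P k j = 0 := by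
            calc ∑ k, ξ k * P k j
                = ∑ k, ((if k = j then ξ k else 0) - ξ j * (s⁻¹ * ξ k ^ 2)) := by
                  refine Finset.sum_congr rfl fun k _ => ?_
                  rw [hPapp k j]; split_ifs with hkj
                  · subst hkj; ring
                  · ring
              _ = ξ j - ξ j * (s⁻¹ * s) := by
                  rw [Finset.sum_sub_distrib, Finset.sum_ite_eq', ← Finset.mul_sum,
                    ← Finset.mul_sum, ← hs_def]
                  simp
              _ = 0 := by field_simp; ring
          rw [this, hPapp i j]; ring
  -- P * h * P = N
  have hPh : ∀ i k, (P * h) i k = h i k - s⁻¹ * ξ i * a k := by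
    intro i k
    rw [mul_apply]
    calc ∑ l, P i l * h l k
        = ∑ l, ((if i = l then h l k else 0) - s⁻¹ * ξ i * (h k l * ξ l)) := by
          refine Finset.sum_congr rfl fun l _ => ?_
          rw [hPapp i l, hsymm k l]; split_ifs with hil <;> ring
      _ = h i k - s⁻¹ * ξ i * a k := by
          rw [Finset.sum_sub_distrib, Finset.sum_ite_eq, ← Finset.mul_sum, hai]
          simp
  have hNeq : P * h * P = N := by
    ext i j
    rw [mul_apply, hNapp i j]
    calc ∑ k, (P * h) i k * P k j
        = ∑ k, ((if k = j then (P * h) i k else 0)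
            - s⁻¹ * ξ j * (h i k * ξ k) + s⁻¹ * ξ i * (s⁻¹ * ξ j) * (a k * ξ k)) := by
          refine Finset.sum_congr rfl fun k _ => ?_
          rw [hPapp k j, hPh i k]
          split_ifs with hkj <;> ring
      _ = (P * h) i j - s⁻¹ * ξ j * a i + s⁻¹ * ξ i * (s⁻¹ * ξ j) * c := by
          rw [Finset.sum_add_distrib, Finset.sum_sub_distrib, Finset.sum_ite_eq',
            ← Finset.mul_sum, ← Finset.mul_sum, ← hca, hai]
          simp
      _ = _ := by rw [hPh i j]; ring
  -- trace equals sum of squares of N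
  have htr : Matrix.trace ((h * P) * (h * P)) = ∑ i, ∑ j, (N i j) ^ 2 := by
    have hPPX : ∀ X : Matrix (Fin n) (Fin n) ℝ, P * (P * X) = P * X := fun X => by
      rw [← mul_assoc, hPP]
    have e1 : N * N = P * ((h * P) * (h * P)) := by
      rw [← hNeq]; simp only [mul_assoc, hPPX]
    have e2 : ((h * P) * (h * P)) * P = (h * P) * (h * P) := by
      simp only [mul_assoc, hPP]
    have e3 : Matrix.trace (N * N) = Matrix.trace ((h * P) * (h * P)) := by
      rw [e1, Matrix.trace_mul_comm, e2]
    rw [← e3, Matrix.trace]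
    simp only [Matrix.diag]
    refine Finset.sum_congr rfl fun i _ => ?_
    rw [mul_apply]
    refine Finset.sum_congr rfl fun j _ => ?_
    have hNsym : N j i = N i j := by rw [hNapp, hNapp, hsymm i j]; ring
    rw [hNsym, sq]
  have hnonneg : (0:ℝ) ≤ ∑ i, ∑ j, (N i j) ^ 2 :=
    Finset.sum_nonneg fun i _ => Finset.sum_nonneg fun j _ => sq_nonneg _
  have hzero_iff : (∑ i, ∑ j, (N i j) ^ 2) = 0 ↔ ∀ i j, N i j = 0 := by
    rw [Finset.sum_eq_zero_iff_of_nonneg (f := fun i => ∑ j, (N i j) ^ 2)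
      (fun i _ => Finset.sum_nonneg fun j _ => sq_nonneg _)]
    constructor
    · intro H i j
      have := (Finset.sum_eq_zero_iff_of_nonneg (fun j _ => sq_nonneg (N i j))).1
        (H i (Finset.mem_univ i)) j (Finset.mem_univ j)
      exact pow_eq_zero_iff (by norm_num) |>.1 this
    · intro H i _
      exact Finset.sum_eq_zero fun j _ => by rw [H i j]; simp
  have hmain : (∑ i, ∑ j, (N i j) ^ 2) = 0 ↔
      ∃ η : Fin n → ℝ, h = Matrix.vecMulVec ξ η + Matrix.vecMulVec η ξ := by
    rw [hzero_iff]
    constructor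
    · intro H
      refine ⟨fun i => s⁻¹ * a i - c / (2 * s ^ 2) * ξ i, ?_⟩
      ext i j
      have hNij := H i j
      rw [hNapp] at hNij
      simp only [Matrix.add_apply, vecMulVec_apply]
      field_simp at hNij ⊢
      nlinarith [hNij]
    · rintro ⟨η, rfl⟩
      set t : ℝ := ∑ j, η j * ξ j with ht_def
      have haa : ∀ k, a k = ξ k * t + η k * s := by
        intro k
        rw [← hai k]
        calc ∑ l, (vecMulVec ξ η + vecMulVec η ξ) k l * ξ l
            = ∑ l, (ξ k * (η l * ξ l) + η k * (ξ l ^ 2)) := by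
              refine Finset.sum_congr rfl fun l _ => ?_
              simp only [Matrix.add_apply, vecMulVec_apply]; ring
          _ = ξ k * t + η k * s := by
              rw [Finset.sum_add_distrib, ← Finset.mul_sum, ← Finset.mul_sum,
                ← ht_def, ← hs_def]
      have hcc : c = 2 * t * s := by
        rw [hc_def]
        calc ∑ i, ξ i * a i = ∑ i, (t * ξ i ^ 2 + s * (η i * ξ i)) := by
              refine Finset.sum_congr rfl fun i _ => ?_
              rw [haa i]; ring
          _ = t * s + s * t := by
              rw [Finset.sum_add_distrib, ← Finset.mul_sum, ← Finset.mul_sum, ← hs_def, ← ht_def]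
          _ = 2 * t * s := by ring
      intro i j
      rw [hNapp, haa i, haa j, hcc]
      simp only [Matrix.add_apply, vecMulVec_apply]
      field_simp
      ring
  refine ⟨by rw [htr]; exact hnonneg, by rw [htr]; exact hmain, fun hne => ?_⟩
  rw [htr]
  rcases lt_or_eq_of_le hnonneg with hlt | heq
  · exact hlt
  · exact absurd (hmain.1 heq.symm) hne
end

section
/- Let h be a symmetric n×n real matrix and let ξ ∈ ℝ^n be nonzero. Then |ξ|² · ∑_{i,k,q=1}^n (ξ_i h_{kq} − ξ_k h_{iq})² − ∑_{i,k=1}^n (ξ_i (h·ξ)_k − ξ_k (h·ξ)_i)² = 2|ξ|⁴ · tr((h·Π_ξ^⊥)²). -/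
/-!
Both sums on the left are instances of Lagrange's identity
`∑ i k, (x i * y k - x k * y i) ^ 2 = 2 * (|x|² |y|² - (x ⬝ y)²)`: the first for `ξ` against each
column of `h`, the second for `ξ` against `h ξ`. On the right, `h Π = h - |ξ|⁻² (h ξ) ξᵀ` is a
rank-one perturbation of `h`, so `tr ((h Π)²) = tr (h²) - 2 |ξ|⁻² |h ξ|² + |ξ|⁻⁴ (ξ ⬝ h ξ)²`.
Symmetry of `h` identifies `tr (hᵀ h)` with `tr (h²)` and `ξᵀ h` with `h ξ`, after which both
sides are the same polynomial in `|ξ|²`, `tr (h²)`, `|h ξ|²` and `ξ ⬝ h ξ`.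
-/

open Matrix

namespace Matrix

variable {ι κ R : Type*} [Fintype ι] [Fintype κ] [CommRing R]

theorem sum_sum_mul_sub_mul_sq (x y : ι → R) :
    ∑ i, ∑ k, (x i * y k - x k * y i) ^ 2 = 2 * ((x ⬝ᵥ x) * (y ⬝ᵥ y) - (x ⬝ᵥ y) ^ 2) := by
  calc ∑ i, ∑ k, (x i * y k - x k * y i) ^ 2
      = ∑ i, ∑ k, ((x i * x i) * (y k * y k) + (y i * y i) * (x k * x k)
          - 2 * ((x i * y i) * (x k * y k))) := by
        congr! 2 with i - k -
        ring
    _ = 2 * ((x ⬝ᵥ x) * (y ⬝ᵥ y) - (x ⬝ᵥ y) ^ 2) := by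
        simp only [Finset.sum_add_distrib, Finset.sum_sub_distrib, ← Finset.mul_sum,
          ← Finset.sum_mul, dotProduct]
        ring

theorem sum_sum_sum_mul_sub_mul_sq (x : ι → R) (h : Matrix ι κ R) :
    ∑ i, ∑ k, ∑ q, (x i * h k q - x k * h i q) ^ 2 =
      2 * ((x ⬝ᵥ x) * trace (hᵀ * h) - (x ᵥ* h) ⬝ᵥ (x ᵥ* h)) := by
  calc ∑ i, ∑ k, ∑ q, (x i * h k q - x k * h i q) ^ 2
      = ∑ q, ∑ i, ∑ k, (x i * h k q - x k * h i q) ^ 2 :=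
        (Finset.sum_congr rfl fun _ _ => Finset.sum_comm).trans Finset.sum_comm
    _ = ∑ q : κ, 2 * ((x ⬝ᵥ x) * (hᵀ * h) q q - (x ᵥ* h) q ^ 2) :=
        Finset.sum_congr rfl fun q _ => sum_sum_mul_sub_mul_sq x (hᵀ q)
    _ = 2 * ((x ⬝ᵥ x) * trace (hᵀ * h) - (x ᵥ* h) ⬝ᵥ (x ᵥ* h)) := by
        simp only [← Finset.mul_sum, Finset.sum_sub_distrib, trace, diag, dotProduct, sq]

theorem trace_sq_mul_one_sub_smul_vecMulVec [DecidableEq ι] (h : Matrix ι ι R) (c : R)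
    (x : ι → R) :
    trace ((h * (1 - c • vecMulVec x x)) * (h * (1 - c • vecMulVec x x))) =
      trace (h * h) - 2 * c * ((x ᵥ* h) ⬝ᵥ (h *ᵥ x)) + c ^ 2 * (x ⬝ᵥ (h *ᵥ x)) ^ 2 := by
  rw [mul_sub, mul_one, mul_smul_comm, mul_vecMulVec]
  simp only [sub_mul, mul_sub, smul_mul, mul_smul_comm, trace_sub, trace_smul]
  rw [trace_mul_comm h (vecMulVec (h *ᵥ x) x)]
  simp only [vecMulVec_mul, vecMul_vecMulVec, trace_vecMulVec, smul_dotProduct, smul_eq_mul,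
    dotProduct_comm (h *ᵥ x)]
  ring

end Matrix

theorem stmt8_general {n : ℕ} (h : Matrix (Fin n) (Fin n) ℝ) (hsym : h.IsSymm)
    (ξ : Fin n → ℝ) :
    (∑ i, ξ i ^ 2) * (∑ i, ∑ k, ∑ q, (ξ i * h k q - ξ k * h i q) ^ 2) -
        ∑ i, ∑ k, (ξ i * h.mulVec ξ k - ξ k * h.mulVec ξ i) ^ 2 =
      2 * (∑ i, ξ i ^ 2) ^ 2 * Matrix.trace ((h * Pperp ξ) * (h * Pperp ξ)) := by
  rcases eq_or_ne ξ 0 with rfl | hξ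
  · simp
  have hS : ∑ i, ξ i ^ 2 = ξ ⬝ᵥ ξ := by simp only [dotProduct, sq]
  have hS0 : ξ ⬝ᵥ ξ ≠ 0 := dotProduct_self_eq_zero.not.mpr hξ
  have hvec : ξ ᵥ* h = h *ᵥ ξ := by rw [← mulVec_transpose, hsym.eq]
  rw [sum_sum_sum_mul_sub_mul_sq, sum_sum_mul_sub_mul_sq, Pperp, hS,
    trace_sq_mul_one_sub_smul_vecMulVec, hsym.eq, hvec]
  field_simp
  ring

theorem stmt8 {n : ℕ} (h : Matrix (Fin n) (Fin n) ℝ) (hsym : h.IsSymm)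
    (ξ : Fin n → ℝ) (hξ : ξ ≠ 0) :
    (∑ i, ξ i ^ 2) * (∑ i, ∑ k, ∑ q, (ξ i * h k q - ξ k * h i q) ^ 2) -
        ∑ i, ∑ k, (ξ i * h.mulVec ξ k - ξ k * h.mulVec ξ i) ^ 2 =
      2 * (∑ i, ξ i ^ 2) ^ 2 * Matrix.trace ((h * Pperp ξ) * (h * Pperp ξ)) :=
  stmt8_general h hsym ξ
end

section
/- Let h be a symmetric n×n real matrix, let ξ ∈ ℝ^n be nonzero, and let S be a real number. Writing T = ξ·h·ξ, then (1/2)|ξ|⁴|h|² − 2S|ξ|²|h·ξ|² + (S+1/4)T² + (S−1)|ξ|²(tr h)·T + (1/4)|ξ|⁴(tr h)² = (S−1/2)·(−2|ξ|²|h·ξ|² + T² + |ξ|²·T·(tr h)) + |ξ|⁴·((1/2)·tr((h·Π_ξ^⊥)²) + (1/4)·(tr(h·Π_ξ^⊥))²). -/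
/-!
`h Π_ξ^⊥ = h - |ξ|⁻² (hξ) ξᵀ` is a rank-one perturbation of `h`, so both traces on the right
are explicit in `|h|²`, `|hξ|²`, `T` and `tr h`; symmetry of `h` is what turns `tr (h²)` into
`|h|²` and the cross terms `tr (h (hξ) ξᵀ)` into `|hξ|²`. After clearing `|ξ|²` the identity is
polynomial.
-/

open Matrix

namespace Matrix

variable {ι R : Type*} [Fintype ι] [CommRing R] {h : Matrix ι ι R}

theorem IsSymm.trace_mul_self (hh : h.IsSymm) : trace (h * h) = ∑ i, ∑ j, h i j ^ 2 := by
  simp only [trace, diag_apply, mul_apply, sq, hh.apply]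

theorem IsSymm.vecMul_eq_mulVec (hh : h.IsSymm) (v : ι → R) : v ᵥ* h = h *ᵥ v := by
  rw [← mulVec_transpose, hh.eq]

theorem IsSymm.trace_mul_self_sub_smul_vecMulVec (hh : h.IsSymm) (ξ : ι → R) (c : R) :
    trace ((h - c • vecMulVec (h *ᵥ ξ) ξ) * (h - c • vecMulVec (h *ᵥ ξ) ξ)) =
      trace (h * h) - 2 * c * ((h *ᵥ ξ) ⬝ᵥ (h *ᵥ ξ)) + c ^ 2 * (ξ ⬝ᵥ (h *ᵥ ξ)) ^ 2 := by
  have hcross : trace (h * vecMulVec (h *ᵥ ξ) ξ) = (h *ᵥ ξ) ⬝ᵥ (h *ᵥ ξ) := by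
    rw [mul_vecMulVec, trace_vecMulVec, dotProduct_comm, dotProduct_mulVec,
      hh.vecMul_eq_mulVec]
  have hrank : trace (vecMulVec (h *ᵥ ξ) ξ * vecMulVec (h *ᵥ ξ) ξ) = (ξ ⬝ᵥ (h *ᵥ ξ)) ^ 2 := by
    rw [vecMulVec_mul_vecMulVec, trace_vecMulVec, dotProduct_smul, smul_eq_mul,
      dotProduct_comm, sq]
  simp only [sub_mul, mul_sub, Matrix.smul_mul, Matrix.mul_smul, trace_sub, trace_smul,
    smul_eq_mul, trace_mul_comm (vecMulVec _ _) h, hcross, hrank]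
  ring

end Matrix

theorem mul_Pperp {n : ℕ} (h : Matrix (Fin n) (Fin n) ℝ) (ξ : Fin n → ℝ) :
    h * Pperp ξ = h - (∑ i, ξ i ^ 2)⁻¹ • vecMulVec (h *ᵥ ξ) ξ := by
  rw [Pperp, mul_sub, mul_one, Matrix.mul_smul, mul_vecMulVec]

theorem trace_mul_Pperp {n : ℕ} (h : Matrix (Fin n) (Fin n) ℝ) (ξ : Fin n → ℝ) :
    trace (h * Pperp ξ) = trace h - (∑ i, ξ i ^ 2)⁻¹ * (ξ ⬝ᵥ (h *ᵥ ξ)) := by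
  rw [mul_Pperp, trace_sub, trace_smul, trace_vecMulVec, dotProduct_comm, smul_eq_mul]

theorem stmt10 {n : ℕ} (h : Matrix (Fin n) (Fin n) ℝ) (hsym : h.IsSymm)
    (ξ : Fin n → ℝ) (hξ : ξ ≠ 0) (S : ℝ) :
    (1 / 2) * (∑ i, ξ i ^ 2) ^ 2 * (∑ i, ∑ j, (h i j) ^ 2) -
        2 * S * (∑ i, ξ i ^ 2) * (∑ k, (h.mulVec ξ k) ^ 2) +
        (S + 1 / 4) * (ξ ⬝ᵥ h.mulVec ξ) ^ 2 +
        (S - 1) * (∑ i, ξ i ^ 2) * Matrix.trace h * (ξ ⬝ᵥ h.mulVec ξ) +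
        (1 / 4) * (∑ i, ξ i ^ 2) ^ 2 * (Matrix.trace h) ^ 2 =
      (S - 1 / 2) *
          (-2 * (∑ i, ξ i ^ 2) * (∑ k, (h.mulVec ξ k) ^ 2) + (ξ ⬝ᵥ h.mulVec ξ) ^ 2 +
            (∑ i, ξ i ^ 2) * (ξ ⬝ᵥ h.mulVec ξ) * Matrix.trace h) +
        (∑ i, ξ i ^ 2) ^ 2 *
          ((1 / 2) * Matrix.trace ((h * Pperp ξ) * (h * Pperp ξ)) +
            (1 / 4) * (Matrix.trace (h * Pperp ξ)) ^ 2) := by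
  have hnormξ : ∑ i, ξ i ^ 2 ≠ 0 := by
    simpa only [dotProduct, sq] using dotProduct_self_eq_zero.not.mpr hξ
  have hnormhξ : (h *ᵥ ξ) ⬝ᵥ (h *ᵥ ξ) = ∑ k, (h *ᵥ ξ) k ^ 2 := by
    simp only [dotProduct, sq]
  rw [trace_mul_Pperp, mul_Pperp, hsym.trace_mul_self_sub_smul_vecMulVec,
    hsym.trace_mul_self, hnormhξ]
  field_simp
  ring
end

section
/- Let n ≥ 1 and 0 ≤ p ≤ n be integers, and let d, ξ : {1,…,n} → ℝ. Write a² = ∑_i ξ_i², T = ∑_i d_i ξ_i², D = ∑_i d_i, Q = ∑_i d_i², R = ∑_i d_i² ξ_i², and for a subset I set S_ξ(I) = ∑_i sgn_I(i) ξ_i² and S_d(I) = ∑_j sgn_I(j) d_j. Then the sum over all subsets I of {1,…,n} of cardinality p of [ (−T + S_ξ(I)·S_d(I))² + 4·∑_{i∈I} ∑_{k∉I} ξ_i² ξ_k² ( S_d(I)² − (d_k − d_i)² ) ] equals C(n,p)·T² − 2(C(n,p) − 4C(n−2,p−1))·a²·T·D + (C(n,p) − 4C(n−2,p−1))·a⁴·D²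 + 4C(n−2,p−1)·a⁴·Q − 8C(n−2,p−1)·a²·R. -/
/-- `sgn_I(j) = 1` if `j ∈ I` and `-1` otherwise. -/
def sgn {n : ℕ} (I : Finset (Fin n)) (j : Fin n) : ℝ := if j ∈ I then 1 else -1

open Finset

lemma C_natCast_s12 (n p : ℕ) : C n p = n.choose p := by
  unfold C
  split_ifs with h
  · simp
  · rw [Nat.choose_eq_zero_of_lt (by omega), Nat.cast_zero]

lemma card_filter_powersetCard_succ_mem_notMem {α : Type*} [DecidableEq α] {s : Finset α}
    {i k : α} (hi : i ∈ s) (hk : k ∈ s) (hik : i ≠ k) (q : ℕ) :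
    #{I ∈ powersetCard (q + 1) s | i ∈ I ∧ k ∉ I} = (#s - 2).choose q := by
  have hcard : #((s.erase i).erase k) = #s - 2 := by
    rw [card_erase_of_mem (mem_erase.2 ⟨hik.symm, hk⟩), card_erase_of_mem hi]
    omega
  rw [← hcard, ← card_powersetCard]
  refine card_nbij' (·.erase i) (insert i) ?_ ?_ ?_ ?_
  · intro I hI
    simp only [coe_filter, mem_powersetCard, Set.mem_ofPred_eq, mem_coe] at hI ⊢
    obtain ⟨⟨hIs, hIc⟩, hiI, hkI⟩ := hI
    refine ⟨fun x hx => ?_, by rw [card_erase_of_mem hiI, hIc, Nat.add_sub_cancel]⟩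
    grind
  · intro J hJ
    simp only [coe_filter, mem_powersetCard, Set.mem_ofPred_eq, mem_coe] at hJ ⊢
    obtain ⟨hJs, hJc⟩ := hJ
    have hiJ : i ∉ J := fun h => by simpa using hJs h
    refine ⟨⟨insert_subset hi fun x hx => ?_, by rw [card_insert_of_notMem hiJ, hJc]⟩,
      mem_insert_self i J, ?_⟩
    · grind
    · grind
  · intro I hI
    simp only [coe_filter, Set.mem_ofPred_eq] at hI
    exact insert_erase hI.2.1
  · intro J hJ
    simp only [mem_powersetCard, mem_coe] at hJ
    exact erase_insert fun h => by simpa using hJ.1 h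

lemma natCast_card_filter_mem_notMem {n p : ℕ} {i k : Fin n} (hik : i ≠ k) :
    (#{I ∈ powersetCard p (univ : Finset (Fin n)) | i ∈ I ∧ k ∉ I} : ℝ) = C (n - 2) (p - 1) := by
  cases p with
  | zero =>
    rw [filter_false_of_mem fun I hI => by simp_all]
    simp [C]
  | succ q =>
    have hn : 2 ≤ n := by
      have := card_le_univ {i, k}
      rw [card_pair hik, Fintype.card_fin] at this
      exact this
    rw [card_filter_powersetCard_succ_mem_notMem (mem_univ i) (mem_univ k) hik, card_univ,
      Fintype.card_fin, show ((n : ℤ) - 2) = ((n - 2 : ℕ) : ℤ) by omega,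
      show ((q + 1 : ℕ) : ℤ) - 1 = q by push_cast; ring, C_natCast_s12, Int.cast_natCast]

lemma sgn_mul_sgn {n : ℕ} (I : Finset (Fin n)) (a b : Fin n) :
    sgn I a * sgn I b =
      1 - 2 * (if a ∈ I ∧ b ∉ I then 1 else 0) - 2 * (if b ∈ I ∧ a ∉ I then 1 else 0) := by
  unfold sgn
  split_ifs <;> simp_all <;> norm_num

lemma natCast_card_powersetCard_univ {n : ℕ} (p : ℕ) :
    (#(powersetCard p (univ : Finset (Fin n))) : ℝ) = C n p := by
  rw [card_powersetCard, card_univ, Fintype.card_fin, C_natCast_s12, Int.cast_natCast]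

lemma sum_sgn_mul_sgn {n p : ℕ} (a b : Fin n) :
    ∑ I ∈ powersetCard p univ, sgn I a * sgn I b =
      (C n p - 4 * C (n - 2) (p - 1) : ℝ) + if a = b then 4 * (C (n - 2) (p - 1) : ℝ) else 0 := by
  simp_rw [sgn_mul_sgn, sum_sub_distrib, ← mul_sum, sum_boole, sum_const, nsmul_one,
    natCast_card_powersetCard_univ]
  rcases eq_or_ne a b with rfl | hab
  · simp
  · rw [if_neg hab, natCast_card_filter_mem_notMem hab, natCast_card_filter_mem_notMem hab.symm]
    ring

lemma sum_sum_sgn_mul_sum_sgn {n p : ℕ} (f g : Fin n → ℝ) :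
    ∑ I ∈ powersetCard p univ, (∑ a, sgn I a * f a) * (∑ b, sgn I b * g b) =
      (C n p - 4 * C (n - 2) (p - 1) : ℝ) * ((∑ a, f a) * ∑ b, g b) +
        4 * C (n - 2) (p - 1) * ∑ a, f a * g a := by
  calc _ = ∑ a, ∑ b, (∑ I ∈ powersetCard p univ, sgn I a * sgn I b) * (f a * g b) := by
        simp_rw [sum_mul_sum, sum_mul]
        rw [sum_comm]
        refine sum_congr rfl fun a _ => ?_
        rw [sum_comm]
        exact sum_congr rfl fun b _ => sum_congr rfl fun I _ => by ring
    _ = _ := by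
        simp_rw [sum_sgn_mul_sgn, add_mul, sum_add_distrib, ite_mul, zero_mul, sum_ite_eq,
          if_pos (mem_univ _), mul_assoc, ← mul_sum, ← sum_mul]

lemma sum_sum_mem_sum_notMem {n p : ℕ} (w : Fin n → Fin n → ℝ) (hw : ∀ i, w i i = 0) :
    ∑ I ∈ powersetCard p univ, ∑ i ∈ I, ∑ k ∈ Iᶜ, w i k =
      C (n - 2) (p - 1) * ∑ i, ∑ k, w i k := by
  calc _ = ∑ i, ∑ k, ∑ I ∈ powersetCard p univ, (if i ∈ I ∧ k ∉ I then 1 else 0) * w i k := by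
        have hI : ∀ I : Finset (Fin n), ∑ i ∈ I, ∑ k ∈ Iᶜ, w i k =
            ∑ i, ∑ k, (if i ∈ I ∧ k ∉ I then 1 else 0) * w i k := fun I => by
          simp_rw [boole_mul, ite_and, sum_ite_irrel, sum_const_zero, ← mem_compl (s := I),
            sum_ite_mem_eq]
        simp_rw [hI]
        rw [sum_comm]
        exact sum_congr rfl fun i _ => sum_comm
    _ = _ := by
        simp_rw [← sum_mul, sum_boole, mul_sum]
        refine sum_congr rfl fun i _ => sum_congr rfl fun k _ => ?_
        rcases eq_or_ne i k with rfl | hik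
        · simp [hw]
        · rw [natCast_card_filter_mem_notMem hik]

lemma sum_sgn_mul {n : ℕ} (I : Finset (Fin n)) (f : Fin n → ℝ) :
    ∑ i, sgn I i * f i = ∑ i ∈ I, f i - ∑ i ∈ Iᶜ, f i := by
  rw [← sum_add_sum_compl I, sub_eq_add_neg, ← sum_neg_distrib]
  congr 1 <;> refine sum_congr rfl fun i hi => ?_ <;> simp_all [sgn]

lemma sum_sum_mul_mul_sub_sq {α : Type*} [Fintype α] (x d : α → ℝ) :
    ∑ i, ∑ k, x i * x k * (d k - d i) ^ 2 =
      2 * (∑ i, x i) * (∑ i, d i ^ 2 * x i) - 2 * (∑ i, d i * x i) ^ 2 := by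
  calc _ = ∑ i, ∑ k,
        (x i * (d k ^ 2 * x k) - 2 * (d i * x i) * (d k * x k) + d i ^ 2 * x i * x k) := by
        refine sum_congr rfl fun i _ => sum_congr rfl fun k _ => by ring
    _ = _ := by
        simp only [sum_add_distrib, sum_sub_distrib, ← mul_sum, ← sum_mul]
        ring

lemma sq_neg_add_mul_add_four_sum_mem_sum_notMem {n : ℕ} (I : Finset (Fin n)) (x : Fin n → ℝ)
    (e : Fin n → Fin n → ℝ) (T s : ℝ) :
    (-T + (∑ i, sgn I i * x i) * s) ^ 2 + 4 * ∑ i ∈ I, ∑ k ∈ Iᶜ, x i * x k * (s ^ 2 - e i k) =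
      T ^ 2 - 2 * T * (s * ∑ i, sgn I i * x i) + (∑ i, x i) ^ 2 * (s * s) -
        4 * ∑ i ∈ I, ∑ k ∈ Iᶜ, x i * x k * e i k := by
  have hcross : ∑ i ∈ I, ∑ k ∈ Iᶜ, x i * x k * (s ^ 2 - e i k) =
      (∑ i ∈ I, x i) * (∑ k ∈ Iᶜ, x k) * s ^ 2 - ∑ i ∈ I, ∑ k ∈ Iᶜ, x i * x k * e i k := by
    simp_rw [sum_mul_sum, sum_mul, mul_sub, sum_sub_distrib]
  rw [hcross, sum_sgn_mul, ← sum_add_sum_compl I x]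
  ring

theorem stmt12_general (n p : ℕ) (d ξ : Fin n → ℝ) :
    ∑ I ∈ Finset.powersetCard p (Finset.univ : Finset (Fin n)),
        ((-(∑ i, d i * ξ i ^ 2) + (∑ i, sgn I i * ξ i ^ 2) * (∑ j, sgn I j * d j)) ^ 2 +
          4 * ∑ i ∈ I, ∑ k ∈ Iᶜ,
            ξ i ^ 2 * ξ k ^ 2 * ((∑ j, sgn I j * d j) ^ 2 - (d k - d i) ^ 2)) =
      (C (n : ℤ) (p : ℤ) : ℝ) * (∑ i, d i * ξ i ^ 2) ^ 2 -
        2 * ((C (n : ℤ) (p : ℤ) : ℝ) - 4 * (C ((n : ℤ) - 2) ((p : ℤ) - 1) : ℝ)) *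
          (∑ i, ξ i ^ 2) * (∑ i, d i * ξ i ^ 2) * (∑ i, d i) +
        ((C (n : ℤ) (p : ℤ) : ℝ) - 4 * (C ((n : ℤ) - 2) ((p : ℤ) - 1) : ℝ)) *
          (∑ i, ξ i ^ 2) ^ 2 * (∑ i, d i) ^ 2 +
        4 * (C ((n : ℤ) - 2) ((p : ℤ) - 1) : ℝ) * (∑ i, ξ i ^ 2) ^ 2 * (∑ i, d i ^ 2) -
        8 * (C ((n : ℤ) - 2) ((p : ℤ) - 1) : ℝ) * (∑ i, ξ i ^ 2) *
          (∑ i, d i ^ 2 * ξ i ^ 2) := by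
  rw [sum_congr rfl fun I _ => sq_neg_add_mul_add_four_sum_mem_sum_notMem I (ξ · ^ 2)
    (fun i k => (d k - d i) ^ 2) _ _]
  simp only [sum_sub_distrib, sum_add_distrib, sum_const, nsmul_eq_mul, ← mul_sum]
  rw [natCast_card_powersetCard_univ, sum_sum_sgn_mul_sum_sgn, sum_sum_sgn_mul_sum_sgn,
    sum_sum_mem_sum_notMem (fun i k => ξ i ^ 2 * ξ k ^ 2 * (d k - d i) ^ 2) (by simp),
    sum_sum_mul_mul_sub_sq]
  simp only [← sq]
  ring

theorem stmt12 (n p : ℕ) (hn : 1 ≤ n) (hp : p ≤ n) (d ξ : Fin n → ℝ) :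
    ∑ I ∈ Finset.powersetCard p (Finset.univ : Finset (Fin n)),
        ((-(∑ i, d i * ξ i ^ 2) + (∑ i, sgn I i * ξ i ^ 2) * (∑ j, sgn I j * d j)) ^ 2 +
          4 * ∑ i ∈ I, ∑ k ∈ Iᶜ,
            ξ i ^ 2 * ξ k ^ 2 * ((∑ j, sgn I j * d j) ^ 2 - (d k - d i) ^ 2)) =
      (C (n : ℤ) (p : ℤ) : ℝ) * (∑ i, d i * ξ i ^ 2) ^ 2 -
        2 * ((C (n : ℤ) (p : ℤ) : ℝ) - 4 * (C ((n : ℤ) - 2) ((p : ℤ) - 1) : ℝ)) *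
          (∑ i, ξ i ^ 2) * (∑ i, d i * ξ i ^ 2) * (∑ i, d i) +
        ((C (n : ℤ) (p : ℤ) : ℝ) - 4 * (C ((n : ℤ) - 2) ((p : ℤ) - 1) : ℝ)) *
          (∑ i, ξ i ^ 2) ^ 2 * (∑ i, d i) ^ 2 +
        4 * (C ((n : ℤ) - 2) ((p : ℤ) - 1) : ℝ) * (∑ i, ξ i ^ 2) ^ 2 * (∑ i, d i ^ 2) -
        8 * (C ((n : ℤ) - 2) ((p : ℤ) - 1) : ℝ) * (∑ i, ξ i ^ 2) *
          (∑ i, d i ^ 2 * ξ i ^ 2) :=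
  stmt12_general n p d ξ
end

section
/- Let n ≥ 1 and 0 ≤ p ≤ n be integers, and let d, ξ : {1,…,n} → ℝ. Write a² = ∑_i ξ_i², T = ∑_i d_i ξ_i², and R = ∑_i d_i² ξ_i². Then ∑_{|I|=p} ∑_{i∈I} ∑_{k∉I} ξ_i² ξ_k² (2 d_i d_k − d_i² − d_k²) = 2·C(n−2,p−1)·(T² − a²·R). -/
open Finset

theorem sum_sum_mem_sum_notMem_eq_sum_card_smul {α M : Type*} [Fintype α] [DecidableEq α]
    [AddCommMonoid M] (𝒜 : Finset (Finset α)) (f : α → α → M) :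
    ∑ I ∈ 𝒜, ∑ i ∈ I, ∑ k ∈ Iᶜ, f i k = ∑ i, ∑ k, #{I ∈ 𝒜 | i ∈ I ∧ k ∉ I} • f i k := by
  have h (I : Finset α) : ∑ i ∈ I, ∑ k ∈ Iᶜ, f i k =
      ∑ i, ∑ k, if i ∈ I ∧ k ∉ I then f i k else 0 := by
    simp only [← mem_compl, ite_and, sum_ite_irrel, sum_ite_mem, univ_inter, sum_const_zero]
  simp only [h, card_filter, sum_smul, ite_smul, one_smul, zero_smul]
  rw [sum_comm]
  exact sum_congr rfl fun i _ => sum_comm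

theorem card_filter_mem_notMem_powersetCard_succ {α : Type*} [DecidableEq α] {s : Finset α}
    {i k : α} (hi : i ∈ s) (hk : k ∈ s) (hik : i ≠ k) (p : ℕ) :
    #{I ∈ s.powersetCard (p + 1) | i ∈ I ∧ k ∉ I} = (#s - 2).choose p := by
  have hcard : #((s.erase i).erase k) = #s - 2 := by
    rw [card_erase_of_mem (mem_erase.2 ⟨hik.symm, hk⟩), card_erase_of_mem hi]; omega
  rw [← hcard, ← card_powersetCard]
  refine card_nbij' (·.erase i) (insert i) ?_ ?_ ?_ ?_
  · rintro I hI
    simp only [coe_filter, mem_powersetCard, Set.mem_ofPred_eq, mem_coe] at hI ⊢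
    obtain ⟨⟨hIs, hIcard⟩, hiI, hkI⟩ := hI
    refine ⟨fun x hx => ?_, by rw [card_erase_of_mem hiI, hIcard]; rfl⟩
    grind
  · rintro J hJ
    simp only [coe_filter, mem_powersetCard, Set.mem_ofPred_eq, mem_coe] at hJ ⊢
    grind
  · rintro I hI
    simp only [coe_filter, mem_powersetCard, Set.mem_ofPred_eq] at hI
    exact insert_erase hI.2.1
  · rintro J hJ
    simp only [mem_powersetCard, mem_coe] at hJ
    exact erase_insert fun h => by simpa using hJ.1 h

theorem C_natCast_sub_two {N : ℕ} (hN : 2 ≤ N) (q : ℕ) :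
    C ((N : ℤ) - 2) q = (N - 2).choose q := by
  unfold C
  split_ifs with h
  · congr; omega
  · rw [Nat.choose_eq_zero_of_lt (by omega), Nat.cast_zero]

theorem natCast_card_filter_mem_notMem_powersetCard {α : Type*} [Fintype α] [DecidableEq α]
    {i k : α} (hik : i ≠ k) (p : ℕ) :
    (#{I ∈ powersetCard p univ | i ∈ I ∧ k ∉ I} : ℤ) = C ((Fintype.card α : ℤ) - 2) (p - 1) := by
  cases p with
  | zero => simp [C]
  | succ q =>
    rw [card_filter_mem_notMem_powersetCard_succ (mem_univ i) (mem_univ k) hik, card_univ,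
      Nat.cast_add_one, add_sub_cancel_right,
      C_natCast_sub_two (Fintype.one_lt_card_iff.2 ⟨i, k, hik⟩)]

theorem sum_sum_weighted_two_mul_mul_sub_sq_sub_sq {ι R : Type*} [CommRing R] (s : Finset ι)
    (w d : ι → R) :
    ∑ i ∈ s, ∑ k ∈ s, w i * w k * (2 * d i * d k - d i ^ 2 - d k ^ 2) =
      2 * ((∑ i ∈ s, d i * w i) ^ 2 - (∑ i ∈ s, w i) * ∑ i ∈ s, d i ^ 2 * w i) := by
  have h : ∀ i k, w i * w k * (2 * d i * d k - d i ^ 2 - d k ^ 2) =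
      2 * (d i * w i) * (d k * w k) - w i * (d k ^ 2 * w k) - d i ^ 2 * w i * w k := by
    intro i k; ring
  simp only [h, sum_sub_distrib, ← mul_sum, ← sum_mul]
  ring

theorem stmt13_general (n p : ℕ) (d ξ : Fin n → ℝ) :
    ∑ I ∈ Finset.powersetCard p (Finset.univ : Finset (Fin n)),
        ∑ i ∈ I, ∑ k ∈ Iᶜ, ξ i ^ 2 * ξ k ^ 2 * (2 * d i * d k - d i ^ 2 - d k ^ 2) =
      2 * (C ((n : ℤ) - 2) ((p : ℤ) - 1) : ℝ) *
        ((∑ i, d i * ξ i ^ 2) ^ 2 - (∑ i, ξ i ^ 2) * (∑ i, d i ^ 2 * ξ i ^ 2)) := by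
  rw [mul_comm 2, mul_assoc,
    ← sum_sum_weighted_two_mul_mul_sub_sq_sub_sq univ (fun i => ξ i ^ 2) d, mul_sum,
    sum_sum_mem_sum_notMem_eq_sum_card_smul]
  refine sum_congr rfl fun i _ => ?_
  rw [mul_sum]
  refine sum_congr rfl fun k _ => ?_
  rcases eq_or_ne i k with rfl | hik
  · ring
  · rw [nsmul_eq_mul, ← Int.cast_natCast, natCast_card_filter_mem_notMem_powersetCard hik,
      Fintype.card_fin]

theorem stmt13 (n p : ℕ) (hn : 1 ≤ n) (hp : p ≤ n) (d ξ : Fin n → ℝ) :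
    ∑ I ∈ Finset.powersetCard p (Finset.univ : Finset (Fin n)),
        ∑ i ∈ I, ∑ k ∈ Iᶜ, ξ i ^ 2 * ξ k ^ 2 * (2 * d i * d k - d i ^ 2 - d k ^ 2) =
      2 * (C ((n : ℤ) - 2) ((p : ℤ) - 1) : ℝ) *
        ((∑ i, d i * ξ i ^ 2) ^ 2 - (∑ i, ξ i ^ 2) * (∑ i, d i ^ 2 * ξ i ^ 2)) :=
  stmt13_general n p d ξ
end
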